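/- Let n ∈ ℕ, 0 < α < n, and p, q ∈ (1, ∞). If there exists a constant A such that ‖I_α f‖_q ≤ A ‖f‖_p for every f ∈ L^p(ℝⁿ), then necessarily 1/q = 1/p − α/n. -/

import Mathlib

open MeasureTheory Set ENNReal

/-- The normalizing constant `γ_n(α) = π^(n/2) 2^α Γ(α/2) / Γ((n-α)/2)` of the Riesz
kernel. -/
noncomputable def rieszGamma (n : ℕ) (α : ℝ) : ℝ :=
  Real.pi ^ ((n : ℝ) / 2) * 2 ^ α * Real.Gamma (α / 2) / Real.Gamma (((n : ℝ) - α) / 2)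

/-- The Riesz potential `I_α f(x) = (1/γ_n(α)) ∫ |x-y|^(α-n) f(y) dy`. -/
noncomputable def rieszPotential (n : ℕ) (α : ℝ) (f : EuclideanSpace ℝ (Fin n) → ℝ)
    (x : EuclideanSpace ℝ (Fin n)) : ℝ :=
  (rieszGamma n α)⁻¹ * ∫ y, ‖x - y‖ ^ (α - (n : ℝ)) * f y

/-!
Test the bound on the indicator `f` of the closed ball `B` of radius `r` about the origin. On the
ball of radius `r` whose centre is at distance `3 r` from the origin, the kernel `‖x - y‖ ^ (α - n)`
(for `y ∈ B`) lies between `(5 r) ^ (α - n)` and `r ^ (α - n)`; keeping away from its singularity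
makes every integral involved obviously finite, and gives `I_α f ≥ c r ^ α` there. Comparing
`L^q` and `L^p` norms yields `r ^ (α + n / q) ≲ A r ^ (n / p)` for every `r > 0`, and a power
of `r` can only stay bounded on `(0, ∞)` if its exponent vanishes.
-/

open Metric

lemma rieszGamma_pos {n : ℕ} {α : ℝ} (hα0 : 0 < α) (hαn : α < n) : 0 < rieszGamma n α := by
  have := Real.Gamma_pos_of_pos (half_pos hα0)
  have := Real.Gamma_pos_of_pos (half_pos (sub_pos.2 hαn))
  unfold rieszGamma
  positivity

lemma le_rieszPotential_indicator {n : ℕ} {α : ℝ} (hαn : α ≤ n) (hγ : 0 ≤ rieszGamma n α)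
    {S : Set (EuclideanSpace ℝ (Fin n))} (hS : MeasurableSet S) (hSfin : volume S ≠ ∞)
    {x : EuclideanSpace ℝ (Fin n)} {d₁ d₂ : ℝ} (hd₁ : 0 < d₁)
    (hdist : ∀ y ∈ S, d₁ ≤ ‖x - y‖ ∧ ‖x - y‖ ≤ d₂) :
    (rieszGamma n α)⁻¹ * (d₂ ^ (α - n) * volume.real S) ≤
      rieszPotential n α (S.indicator fun _ => 1) x := by
  have hs : α - n ≤ 0 := sub_nonpos.2 hαn
  have hint : IntegrableOn (fun y => ‖x - y‖ ^ (α - n)) S volume := by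
    refine Measure.integrableOn_of_bounded hSfin
      (by fun_prop : Measurable _).aestronglyMeasurable (M := d₁ ^ (α - n)) ?_
    filter_upwards [self_mem_ae_restrict hS] with y hy
    rw [Real.norm_of_nonneg (by positivity)]
    exact Real.rpow_le_rpow_of_nonpos hd₁ (hdist y hy).1 hs
  have hconv : (fun y => ‖x - y‖ ^ (α - n) * S.indicator (fun _ => (1 : ℝ)) y) =
      S.indicator fun y => ‖x - y‖ ^ (α - n) := by
    ext y; by_cases hy : y ∈ S <;> simp [hy]
  unfold rieszPotential
  rw [hconv, integral_indicator hS]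
  gcongr
  exact setIntegral_ge_of_const_le_real hS hSfin (fun y hy => Real.rpow_le_rpow_of_nonpos
    (hd₁.trans_le (hdist y hy).1) (hdist y hy).2 hs) hint

lemma eLpNorm_indicator_const_ofReal {X : Type*} [MeasurableSpace X] {μ : Measure X} {s : Set X}
    (hs : MeasurableSet s) (hμs : μ s ≠ ∞) {p : ℝ} (hp : 0 < p) (c : ℝ) :
    eLpNorm (s.indicator fun _ => c) (ENNReal.ofReal p) μ =
      ENNReal.ofReal (|c| * μ.real s ^ (1 / p)) := by
  rw [eLpNorm_indicator_const hs (by simpa using hp) ofReal_ne_top, ENNReal.toReal_ofReal hp.le,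
    ENNReal.ofReal_mul (abs_nonneg c), ← Real.enorm_eq_ofReal_abs, measureReal_def,
    ← ENNReal.ofReal_rpow_of_nonneg ENNReal.toReal_nonneg (by positivity),
    ENNReal.ofReal_toReal hμs]

lemma eq_of_forall_mul_rpow_le {a b C₁ C₂ : ℝ} (hC₁ : 0 < C₁)
    (h : ∀ r : ℝ, 0 < r → C₁ * r ^ a ≤ C₂ * r ^ b) : a = b := by
  by_contra hab
  have hab' : a - b ≠ 0 := sub_ne_zero.2 hab
  set r := (|C₂ / C₁| + 1) ^ (a - b)⁻¹
  have hr : 0 < r := by positivity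
  have hre : r ^ (a - b) = |C₂ / C₁| + 1 := by
    rw [← Real.rpow_mul (by positivity), inv_mul_cancel₀ hab', Real.rpow_one]
  have hle : r ^ (a - b) ≤ C₂ / C₁ := by
    rw [le_div_iff₀ hC₁, ← mul_le_mul_iff_of_pos_right (Real.rpow_pos_of_pos hr b)]
    calc r ^ (a - b) * C₁ * r ^ b = C₁ * r ^ a := by
          rw [mul_right_comm, ← Real.rpow_add hr, sub_add_cancel, mul_comm]
      _ ≤ C₂ * r ^ b := h r hr
  linarith [le_abs_self (C₂ / C₁)]

lemma rieszPotential_bound_indicator_closedBall {n : ℕ} (hn : 0 < n) {α p q A : ℝ} (hαn : α ≤ n)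
    (hγ : 0 < rieszGamma n α) (hp : 0 < p) (hq : 0 < q)
    (hbound : ∀ f : EuclideanSpace ℝ (Fin n) → ℝ, MemLp f (ENNReal.ofReal p) volume →
      eLpNorm (rieszPotential n α f) (ENNReal.ofReal q) volume
        ≤ ENNReal.ofReal A * eLpNorm f (ENNReal.ofReal p) volume)
    {r : ℝ} (hr : 0 < r) :
    (rieszGamma n α)⁻¹
        * ((5 * r) ^ (α - n) * volume.real (closedBall (0 : EuclideanSpace ℝ (Fin n)) r))
        * volume.real (closedBall (0 : EuclideanSpace ℝ (Fin n)) r) ^ (1 / q)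
      ≤ A * volume.real (closedBall (0 : EuclideanSpace ℝ (Fin n)) r) ^ (1 / p) := by
  have : Nonempty (Fin n) := ⟨⟨0, hn⟩⟩
  obtain ⟨z, hz⟩ := exists_norm_eq (EuclideanSpace ℝ (Fin n)) (by positivity : 0 ≤ 3 * r)
  set B := closedBall (0 : EuclideanSpace ℝ (Fin n)) r
  set m := volume.real B
  have hBfin : volume B ≠ ∞ := measure_closedBall_lt_top.ne
  have hm : 0 < m := ENNReal.toReal_pos (measure_closedBall_pos _ _ hr).ne' hBfin
  set c := (rieszGamma n α)⁻¹ * ((5 * r) ^ (α - n) * m)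
  have hc : 0 < c := by positivity
  -- on the ball `closedBall z r`, all of `B` lies at distance between `r` and `5 * r`
  have hlow : ∀ x ∈ closedBall z r, c ≤ rieszPotential n α (B.indicator fun _ => 1) x := by
    intro x hx
    refine le_rieszPotential_indicator hαn hγ.le measurableSet_closedBall hBfin hr fun y hy => ?_
    rw [mem_closedBall, dist_eq_norm] at hx
    rw [mem_closedBall, dist_zero_right] at hy
    have h₁ := norm_add₃_le (a := z - x) (b := x - y) (c := y)
    have h₂ := norm_add₃_le (a := x - z) (b := z) (c := -y)
    rw [show z - x + (x - y) + y = z by abel, norm_sub_rev] at h₁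
    rw [show x - z + z + -y = x - y by abel, norm_neg] at h₂
    constructor <;> linarith
  have hmono : eLpNorm ((closedBall z r).indicator fun _ => c) (ENNReal.ofReal q) volume ≤
      eLpNorm (rieszPotential n α (B.indicator fun _ => 1)) (ENNReal.ofReal q) volume := by
    refine eLpNorm_mono fun x => ?_
    by_cases hx : x ∈ closedBall z r
    · simpa [hx, abs_of_pos hc] using (hlow x hx).trans (le_abs_self _)
    · simp [hx]
  have hf : MemLp (B.indicator fun _ => (1 : ℝ)) (ENNReal.ofReal p) volume :=
    memLp_indicator_const _ measurableSet_closedBall 1 (Or.inr hBfin)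
  have h := hmono.trans (hbound _ hf)
  rw [eLpNorm_indicator_const_ofReal measurableSet_closedBall measure_closedBall_lt_top.ne hq,
    eLpNorm_indicator_const_ofReal measurableSet_closedBall hBfin hp,
    Measure.addHaar_real_closedBall_center, abs_of_pos hc, abs_one, one_mul,
    ← ENNReal.ofReal_mul' (by positivity), ENNReal.ofReal_le_ofReal_iff'] at h
  exact h.resolve_right (not_le.2 (by positivity))

theorem riesz_potential_exponent_necessary_general (n : ℕ) (α p q : ℝ)
    (hα0 : 0 < α) (hαn : α < n) (hp : 1 < p) (hq : 1 < q) (A : ℝ)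
    (hbound : ∀ f : EuclideanSpace ℝ (Fin n) → ℝ, MemLp f (ENNReal.ofReal p) volume →
      eLpNorm (rieszPotential n α f) (ENNReal.ofReal q) volume
        ≤ ENNReal.ofReal A * eLpNorm f (ENNReal.ofReal p) volume) :
    1 / q = 1 / p - α / n := by
  have hn : 0 < n := by exact_mod_cast hα0.trans hαn
  have hγ := rieszGamma_pos hα0 hαn
  set ω := volume.real (closedBall (0 : EuclideanSpace ℝ (Fin n)) 1)
  have hω : 0 < ω := ENNReal.toReal_pos (measure_closedBall_pos _ _ one_pos).ne'
    measure_closedBall_lt_top.ne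
  have hscale : ∀ r : ℝ, 0 < r →
      ((rieszGamma n α)⁻¹ * 5 ^ (α - n) * ω * ω ^ (1 / q)) * r ^ (α + n / q)
        ≤ (A * ω ^ (1 / p)) * r ^ (n / p) := by
    intro r hr
    have h := rieszPotential_bound_indicator_closedBall hn hαn.le hγ (by linarith) (by linarith)
      hbound hr
    have hpow : ∀ t : ℝ, (r ^ (n : ℝ) * ω) ^ t = ω ^ t * r ^ (n * t) := fun t => by
      rw [Real.mul_rpow (by positivity) hω.le, ← Real.rpow_mul hr.le, mul_comm]
    rw [Measure.addHaar_real_closedBall' _ _ hr.le, finrank_euclideanSpace_fin,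
      ← Real.rpow_natCast, Real.mul_rpow (by norm_num) hr.le, hpow, hpow] at h
    rw [show α + n / q = α - n + n + n * (1 / q) by ring, Real.rpow_add hr, Real.rpow_add hr,
      div_eq_mul_one_div (n : ℝ) p]
    linarith
  have hexp := eq_of_forall_mul_rpow_le (by positivity) hscale
  field_simp at hexp ⊢
  linarith

/-- **Necessity of the Sobolev exponent.** Let `0 < α < n` and `p, q ∈ (1,∞)`. If there
is a constant `A` with `‖I_α f‖_q ≤ A ‖f‖_p` for all `f ∈ L^p(ℝⁿ)`, then necessarily
`1/q = 1/p - α/n`. -/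
theorem riesz_potential_exponent_necessary (n : ℕ) (hn : 0 < n) (α p q : ℝ)
    (hα0 : 0 < α) (hαn : α < n) (hp : 1 < p) (hq : 1 < q) (A : ℝ)
    (hbound : ∀ f : EuclideanSpace ℝ (Fin n) → ℝ, MemLp f (ENNReal.ofReal p) volume →
      eLpNorm (rieszPotential n α f) (ENNReal.ofReal q) volume
        ≤ ENNReal.ofReal A * eLpNorm f (ENNReal.ofReal p) volume) :
    1 / q = 1 / p - α / n :=
  riesz_potential_exponent_necessary_general n α p q hα0 hαn hp hq A hbound
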